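/- Let s = (s₁,s₂,s₃) ∈ ℝ³ with s₁,s₂,s₃ > 0. For each r = 1,2,3, the 2×2 principal minor of the matrix M₂₄(s, a⁰(s)) obtained by deleting its r-th row and r-th column equals 4S(s)(s_{r+1}-s_{r+2})²/s_r² (indices mod 3). -/
import Mathlib


open Matrix

/-- `S(s) = 2(s₁s₂+s₁s₃+s₂s₃) - (s₁²+s₂²+s₃²)`. -/
noncomputable def Spoly (s : Fin 3 → ℝ) : ℝ :=
  2 * (s 0 * s 1 + s 0 * s 2 + s 1 * s 2) - (s 0 ^ 2 + s 1 ^ 2 + s 2 ^ 2)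

/-- `p_r(s) = (s_{r+1}-s_{r+2})² + 2 s_r (s_{r+1}+s_{r+2}) - 3 s_r²`, indices mod 3. -/
noncomputable def ppoly (s : Fin 3 → ℝ) (r : Fin 3) : ℝ :=
  (s (r + 1) - s (r + 2)) ^ 2 + 2 * s r * (s (r + 1) + s (r + 2)) - 3 * s r ^ 2

/-- `a_r⁰(s) = ((s_{r+1}-s_{r+2})² - s_r²)/(2 s_r)`, indices mod 3. -/
noncomputable def a0 (s : Fin 3 → ℝ) (r : Fin 3) : ℝ :=
  ((s (r + 1) - s (r + 2)) ^ 2 - s r ^ 2) / (2 * s r)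

/-- First block of the modified curvature operator of `(W²⁴, g_s)`. -/
noncomputable def M24 (s a : Fin 3 → ℝ) : Matrix (Fin 3) (Fin 3) ℝ :=
  !![4 * s 0,                   Spoly s / s 2 - 2 * a 2,  Spoly s / s 1 - 2 * a 1;
     Spoly s / s 2 - 2 * a 2,   4 * s 1,                  Spoly s / s 0 - 2 * a 0;
     Spoly s / s 1 - 2 * a 1,   Spoly s / s 0 - 2 * a 0,  4 * s 2]

/-- The 2×2 principal minor of `M₂₄(s, a⁰(s))` obtained by deleting the `r`-th row and
column equals `4 S(s) (s_{r+1}-s_{r+2})² / s_r²`. -/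
theorem principalMinor_M24 (s : Fin 3 → ℝ) (hs : ∀ r, 0 < s r) :
    ∀ r : Fin 3,
      ((M24 s (a0 s)).submatrix r.succAbove r.succAbove).det
        = 4 * Spoly s * (s (r + 1) - s (r + 2)) ^ 2 / s r ^ 2 := by
  have h0 := (hs 0).ne'
  have h1 := (hs 1).ne'
  have h2 := (hs 2).ne'
  intro r
  fin_cases r <;>
  · simp [Matrix.det_fin_two, M24, a0, Spoly, Fin.succAbove, Fin.lt_def, Matrix.submatrix,
      Fin.isValue, show ((0:Fin 3)+1 = 1) from rfl, show ((0:Fin 3)+2 = 2) from rfl,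
      show ((1:Fin 3)+1 = 2) from rfl, show ((1:Fin 3)+2 = 0) from rfl,
      show ((2:Fin 3)+1 = 0) from rfl, show ((2:Fin 3)+2 = 1) from rfl]
    field_simp
    ring
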